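/- Let n ≥ 0, m ≥ 0 and q ≥ 0 be integers and let b be either 0 or an odd integer with 0 < b < 2^q. Let N be the canonical form of n. Then for every number H whose value is m + b/2^q, N : H = n + m + b/2^q. -/

import Mathlib

/-! Port note: Mathlib no longer contains combinatorial game theory (`SetTheory.PGame`,
`SetTheory.Game`, `powHalf` were removed). The notions used below are re-created here with
their meaning in the Mathlib of December 2024. -/

universe u

namespace SetTheory

/-- Pre-games (as in the old Mathlib `SetTheory.PGame`). -/
inductive PGame : Type (u + 1)
  | mk : ∀ α β : Type u, (α → PGame) → (β → PGame) → PGame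

namespace PGame

/-- The indexing type for allowable moves by Left. -/
def LeftMoves : PGame → Type u
  | mk l _ _ _ => l

/-- The indexing type for allowable moves by Right. -/
def RightMoves : PGame → Type u
  | mk _ r _ _ => r

/-- The new game after Left makes an allowed move. -/
def moveLeft : ∀ g : PGame, LeftMoves g → PGame
  | mk _l _ L _ => L

/-- The new game after Right makes an allowed move. -/
def moveRight : ∀ g : PGame, RightMoves g → PGame
  | mk _ _r _ R => R

/-- Auxiliary: the pair `(x ≤ y, y ≤ x)`, defined by the old recursive characterization
`x ≤ y ↔ (∀ i, ¬ y ≤ x.moveLeft i) ∧ (∀ j, ¬ y.moveRight j ≤ x)`. -/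
noncomputable def leAux (x : PGame.{u}) : PGame.{u} → Prop × Prop :=
  PGame.rec (motive := fun _ => PGame.{u} → Prop × Prop)
    (fun _ _ xL xR ihL ihR y =>
      PGame.rec (motive := fun _ => Prop × Prop)
        (fun yl yr yL yR jhL jhR =>
          ((∀ i, ¬ (ihL i (mk yl yr yL yR)).2) ∧ (∀ j, ¬ (jhR j).2),
           (∀ j, ¬ (jhL j).1) ∧ (∀ i, ¬ (ihR i (mk yl yr yL yR)).1)))
        y)
    x

instance : LE PGame.{u} :=
  ⟨fun x y => (leAux x y).1⟩

theorem leAux_mk {xl xr yl yr : Type u} (xL : xl → PGame.{u}) (xR : xr → PGame.{u})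
    (yL : yl → PGame.{u}) (yR : yr → PGame.{u}) :
    leAux (mk xl xr xL xR) (mk yl yr yL yR) =
      ((∀ i, ¬ (leAux (xL i) (mk yl yr yL yR)).2) ∧ (∀ j, ¬ (leAux (mk xl xr xL xR) (yR j)).2),
       (∀ j, ¬ (leAux (mk xl xr xL xR) (yL j)).1) ∧ (∀ i, ¬ (leAux (xR i) (mk yl yr yL yR)).1)) :=
  rfl

theorem leAux_swap (x y : PGame.{u}) :
    ((leAux x y).2 ↔ (leAux y x).1) ∧ ((leAux y x).2 ↔ (leAux x y).1) := by
  induction x generalizing y with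
  | mk xl xr xL xR ihx1 ihx2 =>
    induction y with
    | mk yl yr yL yR ihy1 ihy2 =>
      rw [leAux_mk, leAux_mk]
      constructor
      · exact and_congr (forall_congr' fun j => not_congr (ihy1 j).2.symm)
          (forall_congr' fun i => not_congr (ihx2 i _).2.symm)
      · exact and_congr (forall_congr' fun i => not_congr (ihx1 i _).1.symm)
          (forall_congr' fun j => not_congr (ihy2 j).1.symm)

theorem le_def' {x y : PGame.{u}} :
    x ≤ y ↔ (∀ i, ¬ y ≤ x.moveLeft i) ∧ (∀ j, ¬ y.moveRight j ≤ x) := by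
  cases x with
  | mk xl xr xL xR =>
    cases y with
    | mk yl yr yL yR =>
      change (leAux (mk xl xr xL xR) (mk yl yr yL yR)).1 ↔ _
      rw [leAux_mk]
      exact and_congr (forall_congr' fun i => not_congr (leAux_swap (xL i) (mk yl yr yL yR)).1)
        (forall_congr' fun j => not_congr (leAux_swap (mk xl xr xL xR) (yR j)).1)

theorem le_refl' (x : PGame.{u}) : x ≤ x := by
  induction x with
  | mk xl xr xL xR ihL ihR =>
    rw [le_def']
    refine ⟨fun i h => ?_, fun j h => ?_⟩
    · rw [le_def'] at h
      exact h.1 i (ihL i)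
    · rw [le_def'] at h
      exact h.2 j (ihR j)

theorem le_trans_aux' {x y z : PGame.{u}}
    (h₁ : ∀ {i}, y ≤ z → z ≤ x.moveLeft i → y ≤ x.moveLeft i)
    (h₂ : ∀ {j}, z.moveRight j ≤ x → x ≤ y → z.moveRight j ≤ y)
    (hxy : x ≤ y) (hyz : y ≤ z) : x ≤ z := by
  rw [le_def'] at hxy hyz ⊢
  exact ⟨fun i h => hxy.1 i (h₁ (le_def'.2 hyz) h),
    fun j h => hyz.2 j (h₂ h (le_def'.2 hxy))⟩

theorem le_trans_all : ∀ x y z : PGame.{u},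
    (x ≤ y → y ≤ z → x ≤ z) ∧ (y ≤ z → z ≤ x → y ≤ x) ∧ (z ≤ x → x ≤ y → z ≤ y) := by
  intro x
  induction x with
  | mk xl xr xL xR IHxl IHxr =>
    intro y
    induction y with
    | mk yl yr yL yR IHyl IHyr =>
      intro z
      induction z with
      | mk zl zr zL zR IHzl IHzr =>
        exact ⟨le_trans_aux' (fun {i} => (IHxl i _ _).2.1) (fun {j} => (IHzr j).2.2),
          le_trans_aux' (fun {i} => (IHyl i _).2.2) (fun {j} => (IHxr j _ _).1),
          le_trans_aux' (fun {i} => (IHzl i).1) (fun {j} => (IHyr j _).2.1)⟩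

instance : Preorder PGame.{u} where
  le_refl := le_refl'
  le_trans x y z := (le_trans_all x y z).1

/-- Two pre-games are equivalent if `x ≤ y` and `y ≤ x`. -/
def PEquiv (x y : PGame.{u}) : Prop :=
  x ≤ y ∧ y ≤ x

instance setoid : Setoid PGame.{u} :=
  ⟨PEquiv, ⟨fun x => ⟨le_rfl, le_rfl⟩, fun h => ⟨h.2, h.1⟩,
    fun h₁ h₂ => ⟨h₁.1.trans h₂.1, h₂.2.trans h₁.2⟩⟩⟩

/-- The pre-game `Zero` is defined by `0 = { | }`. -/
instance : Zero PGame.{u} :=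
  ⟨mk PEmpty PEmpty PEmpty.elim PEmpty.elim⟩

/-- The pre-game `One` is defined by `1 = { 0 | }`. -/
instance : One PGame.{u} :=
  ⟨mk PUnit PEmpty (fun _ => 0) PEmpty.elim⟩

/-- The negation of `{L | R}` is `{-R | -L}`. -/
def neg : PGame.{u} → PGame.{u}
  | ⟨l, r, L, R⟩ => ⟨r, l, fun i => neg (R i), fun i => neg (L i)⟩

instance : Neg PGame.{u} :=
  ⟨neg⟩

/-- The sum of `x = {xL | xR}` and `y = {yL | yR}` is `{xL + y, x + yL | xR + y, x + yR}`. -/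
noncomputable def add (x : PGame.{u}) : PGame.{u} → PGame.{u} :=
  PGame.rec (motive := fun _ => PGame.{u} → PGame.{u})
    (fun xl xr xL xR IHxl IHxr y =>
      PGame.rec (motive := fun _ => PGame.{u})
        (fun yl yr yL yR IHyl IHyr =>
          mk (xl ⊕ yl) (xr ⊕ yr)
            (Sum.rec (fun i => IHxl i (mk yl yr yL yR)) IHyl)
            (Sum.rec (fun i => IHxr i (mk yl yr yL yR)) IHyr))
        y)
    x

noncomputable instance : Add PGame.{u} :=
  ⟨add⟩

/-- A pre-game is numeric if everything in the L set is less than everything in the R set,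
and all the elements of L and R are also numeric. -/
def Numeric : PGame.{u} → Prop
  | ⟨_, _, L, R⟩ => (∀ i j, L i < R j) ∧ (∀ i, Numeric (L i)) ∧ ∀ j, Numeric (R j)

/-- For a natural number `n`, the pre-game `powHalf (n + 1)` is recursively defined as
`{0 | powHalf n}`. These are the explicit expressions of powers of `1 / 2`. -/
def powHalf : ℕ → PGame.{u}
  | 0 => 1
  | n + 1 => ⟨PUnit, PUnit, fun _ => 0, fun _ => powHalf n⟩

end PGame

/-- Games: pre-games modulo equivalence. -/
abbrev Game :=
  Quotient PGame.setoid

namespace Game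

instance : Zero Game.{u} :=
  ⟨⟦0⟧⟩

/-- Addition of games (well defined on classes, since `+` respects equivalence of
pre-games; the representative chosen does not matter). -/
noncomputable instance : Add Game.{u} :=
  ⟨fun a b => ⟦a.out + b.out⟧⟩

/-- Negation of games (well defined on classes, as above). -/
noncomputable instance : Neg Game.{u} :=
  ⟨fun a => ⟦-a.out⟧⟩

/-- Integer multiples, as `zsmul` of the old `AddCommGroup Game` instance (`zsmulRec`). -/
noncomputable instance : SMul ℤ Game.{u} :=
  ⟨zsmulRec⟩

end Game

end SetTheory

open SetTheory PGame

/-- Ordinal sum `G : H`: players may move in the base `G` (ending all play in the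
subordinate) or in the subordinate `H`. -/
def ordinalSum (G : PGame.{u}) : PGame.{u} → PGame.{u}
  | ⟨yl, yr, yL, yR⟩ =>
    ⟨G.LeftMoves ⊕ yl, G.RightMoves ⊕ yr,
     Sum.elim G.moveLeft fun j => ordinalSum G (yL j),
     Sum.elim G.moveRight fun j => ordinalSum G (yR j)⟩

/-- `G ≜ H`: equivalence modulo domination.  Every Left option of `G` is `≤` some Left
option of `H`, every Left option of `H` is `≤` some Left option of `G`, every Right option
of `G` is `≥` some Right option of `H`, and every Right option of `H` is `≥` some Right
option of `G`. -/
def EquivDom (G H : PGame) : Prop :=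
  (∀ i, ∃ j, G.moveLeft i ≤ H.moveLeft j) ∧
  (∀ j, ∃ i, H.moveLeft j ≤ G.moveLeft i) ∧
  (∀ i, ∃ j, H.moveRight j ≤ G.moveRight i) ∧
  (∀ j, ∃ i, G.moveRight i ≤ H.moveRight j)

/-- The ball `⟨a | b⟩`: the game with exactly one Left option `a` and exactly one Right
option `b`. -/
def ball (a b : PGame.{u}) : PGame.{u} :=
  ⟨PUnit, PUnit, fun _ => a, fun _ => b⟩

/-- The canonical form of a natural number: `0 ≅ ⟨ | ⟩` and `n+1 ≅ ⟨n | ⟩`. -/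
def canonNat : ℕ → PGame
  | 0 => 0
  | n + 1 => ⟨PUnit, PEmpty, fun _ => canonNat n, PEmpty.elim⟩

/-- The canonical form of an integer: for `n ≥ 0` it is `canonNat n`, and the canonical
form of a negative integer is the negative of the canonical form of its absolute value. -/
def canonInt (n : ℤ) : PGame :=
  if 0 ≤ n then canonNat n.toNat else -canonNat (-n).toNat

/-- The game value of the dyadic rational `a / 2 ^ q`. -/
noncomputable def dyadicVal (a : ℤ) (q : ℕ) : Game :=
  a • (⟦powHalf q⟧ : Game)

/-! The value of `G : H` depends only on the value of `H`: both `≤` and `⧏` pass from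
subordinates to ordinal sums option by option. So `H` may be replaced by the sum of `m` copies
of `1` and `b` copies of `powHalf q`. Every subposition `K` of that sum is nonnegative and is
either `0` or has a Left option `Kᴸ` with `K ≤ Kᴸ + 1`. For such `H`, and `N` the canonical form
of `n`, one checks option by option that `N : H = N + H`; the only delicate option is the Left
option `Nᴸ + H` of `N + H`, which is answered in `N : H` by `Nᴸ` if `H = 0` and otherwise by
`N : Hᴸ` for a Left option with `H ≤ Hᴸ + 1`, because `Nᴸ + 1 = N`. -/

namespace SetTheory

namespace PGame

def LF (x y : PGame.{u}) : Prop := ¬ y ≤ x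

infixl:50 " ⧏ " => PGame.LF

variable {x y z : PGame.{u}}

theorem le_iff_forall_lf : x ≤ y ↔ (∀ i, x.moveLeft i ⧏ y) ∧ ∀ j, x ⧏ y.moveRight j :=
  le_def'

theorem lf_iff_exists_le : x ⧏ y ↔ (∃ i, x ≤ y.moveLeft i) ∨ ∃ j, x.moveRight j ≤ y := by
  simp only [LF, le_def' (x := y), not_and_or, not_forall, not_not]

theorem lf_of_le_moveLeft {i : y.LeftMoves} (h : x ≤ y.moveLeft i) : x ⧏ y :=
  lf_iff_exists_le.2 (Or.inl ⟨i, h⟩)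

theorem lf_of_moveRight_le {j : x.RightMoves} (h : x.moveRight j ≤ y) : x ⧏ y :=
  lf_iff_exists_le.2 (Or.inr ⟨j, h⟩)

theorem moveLeft_lf (i : x.LeftMoves) : x.moveLeft i ⧏ x :=
  lf_of_le_moveLeft le_rfl

theorem lf_moveRight (j : x.RightMoves) : x ⧏ x.moveRight j :=
  lf_of_moveRight_le le_rfl

theorem _root_.LE.le.moveLeft_lf (h : x ≤ y) (i : x.LeftMoves) : x.moveLeft i ⧏ y :=
  (le_iff_forall_lf.1 h).1 i

theorem _root_.LE.le.lf_moveRight (h : x ≤ y) (j : y.RightMoves) : x ⧏ y.moveRight j :=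
  (le_iff_forall_lf.1 h).2 j

theorem lf_of_lf_of_le (h : x ⧏ y) (h' : y ≤ z) : x ⧏ z :=
  fun h'' => h (h'.trans h'')

theorem lf_of_le_of_lf (h : x ≤ y) (h' : y ⧏ z) : x ⧏ z :=
  fun h'' => h' (h''.trans h)

theorem equiv_of_mk_equiv (L : x.LeftMoves ≃ y.LeftMoves) (R : x.RightMoves ≃ y.RightMoves)
    (hL : ∀ i, x.moveLeft i ≈ y.moveLeft (L i)) (hR : ∀ j, x.moveRight j ≈ y.moveRight (R j)) :
    x ≈ y := by
  constructor <;> rw [le_iff_forall_lf] <;> constructor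
  · exact fun i => lf_of_le_moveLeft (hL i).1
  · intro j
    obtain ⟨j, rfl⟩ := R.surjective j
    exact lf_of_moveRight_le (hR j).1
  · intro i
    obtain ⟨i, rfl⟩ := L.surjective i
    exact lf_of_le_moveLeft (hL i).2
  · exact fun j => lf_of_moveRight_le (hR j).2

def toLeftMovesAdd : x.LeftMoves ⊕ y.LeftMoves ≃ (x + y).LeftMoves := by
  cases x; cases y; exact Equiv.refl _

def toRightMovesAdd : x.RightMoves ⊕ y.RightMoves ≃ (x + y).RightMoves := by
  cases x; cases y; exact Equiv.refl _

theorem add_moveLeft_inl (x y : PGame.{u}) (i : x.LeftMoves) :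
    (x + y).moveLeft (toLeftMovesAdd (.inl i)) = x.moveLeft i + y := by
  cases x; cases y; rfl

theorem add_moveLeft_inr (x y : PGame.{u}) (i : y.LeftMoves) :
    (x + y).moveLeft (toLeftMovesAdd (.inr i)) = x + y.moveLeft i := by
  cases x; cases y; rfl

theorem add_moveRight_inl (x y : PGame.{u}) (j : x.RightMoves) :
    (x + y).moveRight (toRightMovesAdd (.inl j)) = x.moveRight j + y := by
  cases x; cases y; rfl

theorem add_moveRight_inr (x y : PGame.{u}) (j : y.RightMoves) :
    (x + y).moveRight (toRightMovesAdd (.inr j)) = x + y.moveRight j := by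
  cases x; cases y; rfl

theorem add_zero_equiv (x : PGame.{u}) : x + 0 ≈ x := by
  induction x with
  | mk xl xr xL xR ihl ihr =>
    refine equiv_of_mk_equiv (Equiv.sumEmpty xl PEmpty) (Equiv.sumEmpty xr PEmpty) ?_ ?_
    · rintro (i | ⟨⟨⟩⟩)
      exact ihl i
    · rintro (j | ⟨⟨⟩⟩)
      exact ihr j

theorem add_comm_equiv (x y : PGame.{u}) : x + y ≈ y + x := by
  induction x generalizing y with
  | mk xl xr xL xR ihxl ihxr =>
    induction y with
    | mk yl yr yL yR ihyl ihyr =>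
      refine equiv_of_mk_equiv (Equiv.sumComm _ _) (Equiv.sumComm _ _) ?_ ?_
      · rintro (i | i)
        exacts [ihxl i _, ihyl i]
      · rintro (j | j)
        exacts [ihxr j _, ihyr j]

theorem add_assoc_equiv (x y z : PGame.{u}) : x + y + z ≈ x + (y + z) := by
  induction x generalizing y z with
  | mk xl xr xL xR ihxl ihxr =>
    induction y generalizing z with
    | mk yl yr yL yR ihyl ihyr =>
      induction z with
      | mk zl zr zL zR ihzl ihzr =>
        refine equiv_of_mk_equiv (Equiv.sumAssoc _ _ _) (Equiv.sumAssoc _ _ _) ?_ ?_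
        · rintro ((i | i) | i)
          exacts [ihxl i _ _, ihyl i _, ihzl i]
        · rintro ((j | j) | j)
          exacts [ihxr j _ _, ihyr j _, ihzr j]

theorem add_le_add_right_and_lf (x y z : PGame.{u}) :
    (x ≤ y → z + x ≤ z + y) ∧ (x ⧏ y → z + x ⧏ z + y) := by
  induction z generalizing x y with
  | mk zl zr zL zR ihzl ihzr =>
    induction x generalizing y with
    | mk xl xr xL xR ihxl ihxr =>
      induction y with
      | mk yl yr yL yR ihyl ihyr =>
        refine ⟨fun h => le_iff_forall_lf.2 ⟨?_, ?_⟩, fun h => ?_⟩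
        · rintro (k | i)
          · exact lf_of_le_moveLeft (i := Sum.inl k) ((ihzl k _ _).1 h)
          · exact (ihxl i _).2 (h.moveLeft_lf i)
        · rintro (k | j)
          · exact lf_of_moveRight_le (j := Sum.inl k) ((ihzr k _ _).1 h)
          · exact (ihyr j).2 (h.lf_moveRight j)
        · rcases lf_iff_exists_le.1 h with ⟨i, hi⟩ | ⟨j, hj⟩
          · exact lf_of_le_moveLeft (i := Sum.inr i) ((ihyl i).1 hi)
          · exact lf_of_moveRight_le (j := Sum.inr j) ((ihxr j _).1 hj)

theorem add_le_add_right' (h : x ≤ y) (z : PGame.{u}) : z + x ≤ z + y :=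
  (add_le_add_right_and_lf x y z).1 h

theorem add_lf_add_right (h : x ⧏ y) (z : PGame.{u}) : z + x ⧏ z + y :=
  (add_le_add_right_and_lf x y z).2 h

theorem add_le_add_left' (h : x ≤ y) (z : PGame.{u}) : x + z ≤ y + z :=
  (add_comm_equiv x z).1.trans ((add_le_add_right' h z).trans (add_comm_equiv z y).1)

theorem add_congr {w : PGame.{u}} (h₁ : w ≈ x) (h₂ : y ≈ z) : w + y ≈ x + z :=
  ⟨(add_le_add_left' h₁.1 y).trans (add_le_add_right' h₂.1 x),
    (add_le_add_left' h₁.2 z).trans (add_le_add_right' h₂.2 w)⟩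

theorem quot_add (x y : PGame.{u}) : (⟦x + y⟧ : Game) = ⟦x⟧ + ⟦y⟧ :=
  Quotient.sound (add_congr (Setoid.symm (Quotient.mk_out x)) (Setoid.symm (Quotient.mk_out y)))

theorem quot_zero : (⟦0⟧ : Game.{u}) = 0 := rfl

/-- Mathlib orders a quotient by the transitive closure of `≤ ∨ ≈`, which here is just `≤`. -/
theorem quot_le_quot {x y : PGame.{u}} : (⟦x⟧ : Game) ≤ ⟦y⟧ ↔ x ≤ y := by
  refine Quotient.le_def.trans ⟨fun h => ?_, fun h => .single (.inl h)⟩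
  induction h with
  | single h => exact h.elim id (·.1)
  | tail _ h ih => exact ih.trans (h.elim id (·.1))

end PGame

namespace Game

instance : One Game.{u} := ⟨⟦1⟧⟩

instance : PartialOrder Game.{u} where
  le_antisymm a b := Quotient.inductionOn₂ a b fun _ _ h₁ h₂ =>
    Quotient.sound ⟨quot_le_quot.1 h₁, quot_le_quot.1 h₂⟩

protected theorem add_assoc (a b c : Game.{u}) : a + b + c = a + (b + c) :=
  Quotient.inductionOn₃ a b c fun x y z => by
    rw [← quot_add, ← quot_add, ← quot_add, ← quot_add]
    exact Quotient.sound (add_assoc_equiv x y z)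

protected theorem add_comm (a b : Game.{u}) : a + b = b + a :=
  Quotient.inductionOn₂ a b fun x y => by
    rw [← quot_add, ← quot_add]
    exact Quotient.sound (add_comm_equiv x y)

protected theorem add_zero (a : Game.{u}) : a + 0 = a :=
  Quotient.inductionOn a fun x => by
    rw [← quot_zero, ← quot_add]
    exact Quotient.sound (add_zero_equiv x)

noncomputable instance : AddCommMonoid Game.{u} where
  add := (· + ·)
  zero := 0
  add_assoc := Game.add_assoc
  zero_add a := by rw [Game.add_comm, Game.add_zero]
  add_zero := Game.add_zero
  add_comm := Game.add_comm
  nsmul := nsmulRec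

instance : IsOrderedAddMonoid Game.{u} where
  add_le_add_left a b := Quotient.inductionOn₂ a b fun x y h c => Quotient.inductionOn c fun z => by
    rw [← quot_add, ← quot_add]
    exact quot_le_quot.2 (add_le_add_left' (quot_le_quot.1 h) z)

end Game

namespace PGame

theorem quot_one : (⟦1⟧ : Game.{u}) = 1 := rfl

theorem quot_powHalf_zero : (⟦powHalf 0⟧ : Game.{u}) = 1 := rfl

def Hereditarily (P : PGame.{u} → Prop) : PGame.{u} → Prop
  | mk l r L R => P (mk l r L R) ∧ (∀ i, Hereditarily P (L i)) ∧ ∀ j, Hereditarily P (R j)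

theorem hereditarily_iff {P : PGame.{u} → Prop} {x : PGame.{u}} :
    Hereditarily P x ↔
      P x ∧ (∀ i, Hereditarily P (x.moveLeft i)) ∧ ∀ j, Hereditarily P (x.moveRight j) := by
  cases x; rfl

theorem hereditarily_zero {P : PGame.{u} → Prop} (h : P 0) : Hereditarily P 0 :=
  hereditarily_iff.2 ⟨h, nofun, nofun⟩

theorem Hereditarily.add {P : PGame.{u} → Prop} (hP : ∀ x y, P x → P y → P (x + y))
    {x y : PGame.{u}} (hx : Hereditarily P x) (hy : Hereditarily P y) : Hereditarily P (x + y) := by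
  induction x generalizing y with
  | mk xl xr xL xR ihxl ihxr =>
    induction y with
    | mk yl yr yL yR ihyl ihyr =>
      obtain ⟨px, hxL, hxR⟩ := id hx
      obtain ⟨py, hyL, hyR⟩ := id hy
      refine hereditarily_iff.2 ⟨hP _ _ px py, ?_, ?_⟩
      · rintro (i | i)
        exacts [ihxl i (hxL i) hy, ihyl i (hyL i)]
      · rintro (j | j)
        exacts [ihxr j (hxR j) hy, ihyr j (hyR j)]

def NonnegNearLeft (x : PGame.{u}) : Prop :=
  0 ≤ (⟦x⟧ : Game) ∧ ((⟦x⟧ : Game) ≤ 0 ∨ ∃ i, (⟦x⟧ : Game) ≤ ⟦x.moveLeft i⟧ + 1)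

theorem NonnegNearLeft.add {x y : PGame.{u}} (hx : NonnegNearLeft x) (hy : NonnegNearLeft y) :
    NonnegNearLeft (x + y) := by
  refine ⟨by rw [quot_add]; exact add_nonneg hx.1 hy.1, ?_⟩
  rw [quot_add]
  rcases hx.2 with hx0 | ⟨i, hi⟩
  · rcases hy.2 with hy0 | ⟨j, hj⟩
    · exact .inl (add_nonpos hx0 hy0)
    · refine .inr ⟨toLeftMovesAdd (.inr j), ?_⟩
      rw [add_moveLeft_inr, quot_add, add_assoc]
      exact add_le_add_right hj _
  · refine .inr ⟨toLeftMovesAdd (.inl i), ?_⟩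
    rw [add_moveLeft_inl, quot_add, add_right_comm]
    exact add_le_add_left hi _

theorem zero_lf_powHalf : ∀ k, (0 : PGame.{u}) ⧏ powHalf k
  | 0 => lf_of_le_moveLeft (i := PUnit.unit) le_rfl
  | _ + 1 => lf_of_le_moveLeft (i := PUnit.unit) le_rfl

theorem zero_le_powHalf : ∀ k, (0 : PGame.{u}) ≤ powHalf k
  | 0 => le_iff_forall_lf.2 ⟨nofun, nofun⟩
  | k + 1 => le_iff_forall_lf.2 ⟨nofun, fun _ => zero_lf_powHalf k⟩

theorem powHalf_succ_le : ∀ k, powHalf.{u} (k + 1) ≤ powHalf k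
  | 0 => le_iff_forall_lf.2 ⟨fun _ => zero_lf_powHalf 0, nofun⟩
  | k + 1 => le_iff_forall_lf.2 ⟨fun _ => zero_lf_powHalf (k + 1),
      fun _ => lf_of_lf_of_le (lf_moveRight (x := powHalf (k + 2)) PUnit.unit) (powHalf_succ_le k)⟩

theorem powHalf_le_one : ∀ k, powHalf.{u} k ≤ 1
  | 0 => le_rfl
  | k + 1 => (powHalf_succ_le k).trans (powHalf_le_one k)

theorem nonnegNearLeft_zero : NonnegNearLeft (0 : PGame.{u}) :=
  ⟨le_rfl, .inl le_rfl⟩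

theorem nonnegNearLeft_powHalf (k : ℕ) : NonnegNearLeft (powHalf.{u} k) := by
  refine ⟨quot_le_quot.2 (zero_le_powHalf k), .inr ?_⟩
  cases k <;> exact ⟨PUnit.unit, (quot_le_quot.2 (powHalf_le_one _)).trans (zero_add _).ge⟩

theorem hereditarily_nonnegNearLeft_powHalf : ∀ k, Hereditarily NonnegNearLeft (powHalf.{u} k)
  | 0 => hereditarily_iff.2
      ⟨nonnegNearLeft_powHalf 0, fun _ => hereditarily_zero nonnegNearLeft_zero, nofun⟩
  | k + 1 => hereditarily_iff.2 ⟨nonnegNearLeft_powHalf (k + 1),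
      fun _ => hereditarily_zero nonnegNearLeft_zero,
      fun _ => hereditarily_nonnegNearLeft_powHalf k⟩

end PGame

end SetTheory

theorem ordinalSum_le_and_lf_ordinalSum (G x y : PGame.{u}) :
    (x ≤ y → ordinalSum G x ≤ ordinalSum G y) ∧ (x ⧏ y → ordinalSum G x ⧏ ordinalSum G y) := by
  induction x generalizing y with
  | mk xl xr xL xR ihxl ihxr =>
    induction y with
    | mk yl yr yL yR ihyl ihyr =>
      refine ⟨fun h => le_iff_forall_lf.2 ⟨?_, ?_⟩, fun h => ?_⟩
      · rintro (i | i)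
        · exact moveLeft_lf (x := ordinalSum G (mk yl yr yL yR)) (.inl i)
        · exact (ihxl i _).2 (h.moveLeft_lf i)
      · rintro (j | j)
        · exact lf_moveRight (x := ordinalSum G (mk xl xr xL xR)) (.inl j)
        · exact (ihyr j).2 (h.lf_moveRight j)
      · rcases lf_iff_exists_le.1 h with ⟨i, hi⟩ | ⟨j, hj⟩
        · exact lf_of_le_moveLeft (i := .inr i) ((ihyl i).1 hi)
        · exact lf_of_moveRight_le (j := .inr j) ((ihxr j _).1 hj)

theorem ordinalSum_congr (G : PGame.{u}) {x y : PGame.{u}} (h : x ≈ y) :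
    ordinalSum G x ≈ ordinalSum G y :=
  ⟨(ordinalSum_le_and_lf_ordinalSum G x y).1 h.1, (ordinalSum_le_and_lf_ordinalSum G y x).1 h.2⟩

theorem ordinalSum_le_add (G : PGame.{u}) {H : PGame.{u}} (hH : 0 ≤ (⟦H⟧ : Game))
    (hL : ∀ i, ordinalSum G (H.moveLeft i) ≤ G + H.moveLeft i)
    (hR : ∀ j, ordinalSum G (H.moveRight j) ≤ G + H.moveRight j) :
    ordinalSum G H ≤ G + H := by
  have hle_add (x : PGame.{u}) : x ≤ x + H := by
    rw [← quot_le_quot, quot_add]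
    exact le_add_of_nonneg_right hH
  cases H with
  | mk hl hr HL HR =>
    refine le_iff_forall_lf.2 ⟨?_, fun k => ?_⟩
    · rintro (i | i)
      · exact lf_of_lf_of_le (moveLeft_lf i) (hle_add G)
      · exact lf_of_le_of_lf (hL i) (add_lf_add_right (moveLeft_lf (x := mk hl hr HL HR) i) G)
    · obtain ⟨j | j, rfl⟩ := toRightMovesAdd.surjective k
      · rw [add_moveRight_inl]
        exact lf_of_lf_of_le (lf_moveRight (x := ordinalSum G (mk hl hr HL HR)) (.inl j))
          (hle_add _)
      · rw [add_moveRight_inr]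
        exact lf_of_lf_of_le (lf_moveRight (x := ordinalSum G (mk hl hr HL HR)) (.inr j)) (hR j)

theorem add_le_ordinalSum {G H : PGame.{u}} [IsEmpty G.RightMoves]
    (hG : ∀ i, (⟦G.moveLeft i⟧ : Game) + 1 ≤ ⟦G⟧)
    (hH : (⟦H⟧ : Game) ≤ 0 ∨ ∃ i, (⟦H⟧ : Game) ≤ ⟦H.moveLeft i⟧ + 1)
    (hL : ∀ i, G + H.moveLeft i ≤ ordinalSum G (H.moveLeft i))
    (hR : ∀ j, G + H.moveRight j ≤ ordinalSum G (H.moveRight j)) :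
    G + H ≤ ordinalSum G H := by
  cases H with
  | mk hl hr HL HR =>
    refine le_iff_forall_lf.2 ⟨fun k => ?_, ?_⟩
    · obtain ⟨i | i, rfl⟩ := toLeftMovesAdd.surjective k
      · rw [add_moveLeft_inl]
        rcases hH with hH | ⟨j, hj⟩
        · refine lf_of_le_moveLeft (i := .inl i) (quot_le_quot.1 ?_)
          rw [quot_add]
          exact add_le_of_nonpos_right hH
        · refine lf_of_le_moveLeft (i := .inr j) (le_trans (quot_le_quot.1 ?_) (hL j))
          rw [quot_add, quot_add]
          calc (⟦G.moveLeft i⟧ : Game) + ⟦mk hl hr HL HR⟧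
              ≤ ⟦G.moveLeft i⟧ + (⟦HL j⟧ + 1) := add_le_add_right hj _
            _ = (⟦G.moveLeft i⟧ + 1) + ⟦HL j⟧ := by rw [add_comm (⟦HL j⟧ : Game), add_assoc]
            _ ≤ ⟦G⟧ + ⟦HL j⟧ := add_le_add_left (hG i) _
      · rw [add_moveLeft_inr]
        exact lf_of_le_of_lf (hL i) (moveLeft_lf (x := ordinalSum G (mk hl hr HL HR)) (.inr i))
    · rintro (j | j)
      · exact isEmptyElim j
      · exact lf_of_lf_of_le (add_lf_add_right (lf_moveRight (x := mk hl hr HL HR) j) G) (hR j)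

theorem ordinalSum_equiv_add {G H : PGame.{u}} [IsEmpty G.RightMoves]
    (hG : ∀ i, (⟦G.moveLeft i⟧ : Game) + 1 ≤ ⟦G⟧) (hH : Hereditarily NonnegNearLeft H) :
    ordinalSum G H ≈ G + H := by
  induction H with
  | mk hl hr HL HR ihL ihR =>
    obtain ⟨⟨hH0, hHstep⟩, hHL, hHR⟩ := hH
    exact ⟨ordinalSum_le_add G hH0 (fun i => (ihL i (hHL i)).1) (fun j => (ihR j (hHR j)).1),
      add_le_ordinalSum hG hHstep (fun i => (ihL i (hHL i)).2) (fun j => (ihR j (hHR j)).2)⟩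

theorem quot_mk_eq_add_one {G : PGame.{u}} [IsEmpty G.RightMoves]
    (hG : ∀ i, (⟦G.moveLeft i⟧ : Game) + 1 ≤ ⟦G⟧) :
    (⟦mk PUnit PEmpty (fun _ => G) PEmpty.elim⟧ : Game) = ⟦G⟧ + 1 := by
  have h₀ : (G + 1).moveLeft (toLeftMovesAdd (.inr PUnit.unit)) ≈ G :=
    (add_moveLeft_inr G 1 PUnit.unit).symm ▸ add_zero_equiv G
  rw [← quot_one, ← quot_add]
  refine le_antisymm (quot_le_quot.2 (le_iff_forall_lf.2 ⟨fun _ => ?_, fun k => ?_⟩))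
    (quot_le_quot.2 (le_iff_forall_lf.2 ⟨fun k => ?_, nofun⟩))
  · exact lf_of_le_moveLeft h₀.2
  · exact (toRightMovesAdd.symm k).elim isEmptyElim nofun
  · obtain ⟨i | ⟨⟩, rfl⟩ := toLeftMovesAdd.surjective k
    · rw [add_moveLeft_inl]
      exact lf_of_le_moveLeft (i := PUnit.unit) (quot_le_quot.1 (by rw [quot_add]; exact hG i))
    · exact lf_of_le_moveLeft (i := PUnit.unit) h₀.1

instance canonNat_rightMoves_isEmpty : ∀ n, IsEmpty (canonNat.{u} n).RightMoves
  | 0 => inferInstanceAs (IsEmpty PEmpty)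
  | _ + 1 => inferInstanceAs (IsEmpty PEmpty)

theorem canonNat_moveLeft_add_one_le :
    ∀ (n : ℕ) (i), (⟦(canonNat.{u} n).moveLeft i⟧ : Game) + 1 ≤ ⟦canonNat n⟧
  | 0, i => PEmpty.elim i
  | n + 1, _ => (quot_mk_eq_add_one (canonNat_moveLeft_add_one_le n)).ge

theorem quot_canonNat (n : ℕ) : (⟦canonNat.{u} n⟧ : Game) = n • 1 := by
  induction n with
  | zero => rfl
  | succ n ih => rw [succ_nsmul, ← ih]; exact quot_mk_eq_add_one (canonNat_moveLeft_add_one_le n)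

def nonnegNearLeftValues : AddSubmonoid Game.{u} where
  carrier := {g | ∃ x, Hereditarily NonnegNearLeft x ∧ ⟦x⟧ = g}
  zero_mem' := ⟨0, hereditarily_zero nonnegNearLeft_zero, rfl⟩
  add_mem' := by
    rintro _ _ ⟨x, hx, rfl⟩ ⟨y, hy, rfl⟩
    exact ⟨x + y, hx.add (fun _ _ => NonnegNearLeft.add) hy, quot_add x y⟩

theorem quot_powHalf_mem_nonnegNearLeftValues (k : ℕ) :
    (⟦powHalf k⟧ : Game.{u}) ∈ nonnegNearLeftValues :=
  ⟨_, hereditarily_nonnegNearLeft_powHalf k, rfl⟩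

theorem dyadicVal_natCast (a q : ℕ) : dyadicVal.{u} a q = a • ⟦powHalf q⟧ := rfl

theorem canon_ordinalSum_pos_general (n m q b : ℕ)
    (H : PGame)
    (hHval : (⟦H⟧ : Game) = dyadicVal m 0 + dyadicVal b q) :
    (⟦ordinalSum (canonNat n) H⟧ : Game) =
      dyadicVal ((n : ℤ) + (m : ℤ)) 0 + dyadicVal b q := by
  rw [dyadicVal_natCast, dyadicVal_natCast] at hHval
  obtain ⟨S, hS, hSH⟩ := add_mem (nsmul_mem (quot_powHalf_mem_nonnegNearLeftValues 0) m)
    (nsmul_mem (quot_powHalf_mem_nonnegNearLeftValues q) b)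
  have hHS : H ≈ S := Quotient.exact (hHval.trans hSH.symm)
  calc (⟦ordinalSum (canonNat n) H⟧ : Game) = ⟦ordinalSum (canonNat n) S⟧ :=
        Quotient.sound (ordinalSum_congr _ hHS)
    _ = ⟦canonNat n + S⟧ :=
        Quotient.sound (ordinalSum_equiv_add (canonNat_moveLeft_add_one_le n) hS)
    _ = _ := by
      rw [quot_add, hSH, quot_canonNat, ← Nat.cast_add, dyadicVal_natCast, dyadicVal_natCast,
        add_nsmul, add_assoc, quot_powHalf_zero]

/-- For integers `n, m, q ≥ 0` and `b` either `0` or odd with `0 < b < 2^q`, `N` the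
canonical form of `n`, and any number `H` of value `m + b/2^q`:
`N : H = n + m + b/2^q`. -/
theorem canon_ordinalSum_pos (n m q b : ℕ)
    (hb : b = 0 ∨ (Odd b ∧ 0 < b ∧ b < 2 ^ q))
    (H : PGame) (hH : H.Numeric)
    (hHval : (⟦H⟧ : Game) = dyadicVal m 0 + dyadicVal b q) :
    (⟦ordinalSum (canonNat n) H⟧ : Game) =
      dyadicVal ((n : ℤ) + (m : ℤ)) 0 + dyadicVal b q :=
  canon_ordinalSum_pos_general n m q b H hHval
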